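/- arXiv:1401.7981 — 4 statements merged into one kernel-verified Lean document; each statement's English description precedes it below -/
import Mathlib

section
/- Let n be a positive integer and let e, a, b, c be positive integers with e < a ≤ b < c, e + c = a + b, and c < n, a + b + c < 2n. Let G be cyclic of order n with generator g, and S = (eg)·(cg)·((n−b)g)·((n−a)g) a minimal zero-sum sequence. If there exist positive integers k, m with kn/c ≤ m ≤ kn/b, gcd(m,n)=1, 1 ≤ k ≤ b, and m·a < n, then ind(S) = 1. -/
/-! With `w = m` the four canonical residues are `m e`, `m c - k n`, `k n - m b` and
`n - m a`: the bounds `k n ≤ m c`, `m b ≤ k n` and `m a < n` (strict, since `m` is a unit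
and `0 < b < c < n`) place each product in the right interval. By `e + c = a + b` they add
up to exactly `n`, while every coefficient sum of a zero-sum sequence is a positive
multiple of `n`. -/

/-- Canonical residue `|x|_n ∈ [1,n]` of `x` modulo `n`. -/
def resid (n x : ℕ) : ℕ := if x % n = 0 then n else x % n

/-- The set of coefficient sums of the sequence (given by its coefficient list
w.r.t. a fixed generator of the cyclic group of order `n`) with respect to all
generators; a generator corresponds to a unit `w` mod `n`. -/
def indSums (n : ℕ) (S : List ℕ) : Set ℕ :=
  {m | ∃ w : ℕ, Nat.Coprime w n ∧ (S.map (fun x => resid n (w * x))).sum = m}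

/-- The index of the sequence: the minimum over generators of the normalized
coefficient sum. -/
noncomputable def seqIndex (n : ℕ) (S : List ℕ) : ℚ :=
  ((sInf (indSums n S) : ℕ) : ℚ) / n

/-- `S` is a minimal zero-sum sequence over the cyclic group of order `n`
(terms encoded by their coefficients w.r.t. a fixed generator). -/
def MinZeroSum (n : ℕ) (S : List ℕ) : Prop :=
  n ∣ S.sum ∧ ∀ T : List ℕ, List.Sublist T S → T ≠ [] → T ≠ S → ¬ n ∣ T.sum

theorem resid_mul_add (n q : ℕ) {r : ℕ} (hr : 0 < r) (hrn : r < n) :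
    resid n (q * n + r) = r := by
  rw [resid, add_comm, Nat.add_mul_mod_self_right, Nat.mod_eq_of_lt hrn, if_neg hr.ne']

theorem resid_modEq (n x : ℕ) : resid n x ≡ x [MOD n] := by
  unfold resid Nat.ModEq
  split_ifs with h <;> simp [h]

theorem resid_pos {n : ℕ} (hn : 0 < n) (x : ℕ) : 0 < resid n x := by
  unfold resid
  split_ifs with h
  · exact hn
  · exact Nat.pos_of_ne_zero h

theorem dvd_of_mem_indSums {n t : ℕ} {S : List ℕ} (hS : n ∣ S.sum) (ht : t ∈ indSums n S) :
    n ∣ t := by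
  obtain ⟨w, -, rfl⟩ := ht
  refine Nat.modEq_zero_iff_dvd.mp ?_
  calc (S.map fun x => resid n (w * x)).sum ≡ (S.map (w * ·)).sum [MOD n] :=
        Nat.ModEq.listSum_map fun x _ => resid_modEq n (w * x)
    _ = w * S.sum := by simpa using List.sum_map_mul_left S id w
    _ ≡ 0 [MOD n] := Nat.modEq_zero_iff_dvd.mpr (hS.mul_left w)

theorem pos_of_mem_indSums {n t : ℕ} {S : List ℕ} (hn : 0 < n) (hS : S ≠ [])
    (ht : t ∈ indSums n S) :
    0 < t := by
  obtain ⟨w, -, rfl⟩ := ht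
  exact List.sum_pos _ (by simp [resid_pos hn]) (by simpa using hS)

theorem seqIndex_eq_one {n : ℕ} {S : List ℕ} (hn : 0 < n) (hS : S ≠ []) (hzero : n ∣ S.sum)
    (hmem : n ∈ indSums n S) : seqIndex n S = 1 := by
  have hleast : IsLeast (indSums n S) n := ⟨hmem, fun t ht =>
    Nat.le_of_dvd (pos_of_mem_indSums hn hS ht) (dvd_of_mem_indSums hzero ht)⟩
  rw [seqIndex, hleast.csInf_eq, div_self (by exact_mod_cast hn.ne')]

theorem mul_ne_mul_of_coprime {m n c : ℕ} (k : ℕ) (hmn : Nat.Coprime m n) (hc : 0 < c)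
    (hcn : c < n) :
    k * n ≠ m * c := by
  intro h
  have : n ∣ c := hmn.symm.dvd_of_dvd_mul_left ⟨k, by rw [← h, mul_comm]⟩
  exact hcn.not_ge (Nat.le_of_dvd hc this)

theorem index_one_of_km_general (n e a b c k m : ℕ) (hn : 0 < n) (he : 0 < e)
    (hea : e < a) (hab : a ≤ b) (hbc : b < c) (hsum : e + c = a + b)
    (hcn : c < n)
    (hmin : MinZeroSum n [e, c, n - b, n - a])
    (hm0 : 0 < m) (hgcd : Nat.Coprime m n)
    (hlow : k * n ≤ m * c) (hhigh : m * b ≤ k * n) (hma : m * a < n) :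
    seqIndex n [e, c, n - b, n - a] = 1 := by
  have hbn : b < n := hbc.trans hcn
  have han : a < n := hab.trans_lt hbn
  have hkm : k ≤ m := Nat.le_of_mul_le_mul_right (hlow.trans (Nat.mul_le_mul_left m hcn.le)) hn
  have hmc : k * n < m * c := hlow.lt_of_ne (mul_ne_mul_of_coprime k hgcd (by omega) hcn)
  have hmb : m * b < k * n := hhigh.lt_of_ne (mul_ne_mul_of_coprime k hgcd (by omega) hbn).symm
  have hme : m * e < m * a := Nat.mul_lt_mul_of_pos_left hea hm0
  have hlin : m * e + m * c = m * a + m * b := by rw [← mul_add, ← mul_add, hsum]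
  have r1 : resid n (m * e) = m * e := by
    simpa using resid_mul_add n 0 (Nat.mul_pos hm0 he) (by omega)
  have r2 : resid n (m * c) = m * c - k * n := by
    rw [← resid_mul_add n k (by omega : 0 < m * c - k * n) (by omega)]
    congr 1; omega
  have r3 : resid n (m * (n - b)) = k * n - m * b := by
    rw [← resid_mul_add n (m - k) (by omega : 0 < k * n - m * b) (by omega)]
    congr 1; zify [hkm, hhigh, hbn.le]; ring
  have r4 : resid n (m * (n - a)) = n - m * a := by
    rw [← resid_mul_add n (m - 1) (by omega : 0 < n - m * a) (by omega)]
    congr 1; zify [hm0, hma.le, han.le]; ring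
  refine seqIndex_eq_one hn (List.cons_ne_nil _ _) hmin.1 ⟨m, hgcd, ?_⟩
  simp only [List.map_cons, List.map_nil, List.sum_cons, List.sum_nil, r1, r2, r3, r4]
  omega

theorem index_one_of_km (n e a b c k m : ℕ) (hn : 0 < n) (he : 0 < e)
    (hea : e < a) (hab : a ≤ b) (hbc : b < c) (hsum : e + c = a + b)
    (hcn : c < n) (h2n : a + b + c < 2 * n)
    (hmin : MinZeroSum n [e, c, n - b, n - a])
    (hk1 : 1 ≤ k) (hkb : k ≤ b) (hm0 : 0 < m) (hgcd : Nat.Coprime m n)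
    (hlow : k * n ≤ m * c) (hhigh : m * b ≤ k * n) (hma : m * a < n) :
    seqIndex n [e, c, n - b, n - a] = 1 :=
  index_one_of_km_general n e a b c k m hn he hea hab hbc hsum hcn hmin hm0 hgcd hlow hhigh hma
end

section
/- Let n, b, c be positive integers with b < c, b ≤ n/2, and suppose m₁ is an integer with m₁ − 1 < n/c ≤ m₁ < n/b < m₁ + 1. For j ≥ 1 let N_j be the number of integers in [jn/c, jn/b). Then N_{j+1} ≤ N_j + 2 for all j ≥ 1. -/
/-! Passing from `j` to `j + 1` shifts the left end `jn/c` by `n/c > m₁ - 1` and the right end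
`jn/b` by `n/b < m₁ + 1`. Hence the ceiling of the left end grows by at least `m₁ - 1` and the
ceiling of the right end by at most `m₁ + 1`, so the interval gains at most two integers. -/

section CeilShift

variable {R : Type*} [Ring R] [LinearOrder R] [IsOrderedRing R] [FloorRing R]

theorem Int.ceil_add_le_of_lt_add_one {a b : R} {m : ℤ} (hb : b < m + 1) :
    ⌈a + b⌉ ≤ ⌈a⌉ + m + 1 := by
  have hceil : ⌈b⌉ ≤ m + 1 := Int.ceil_le.2 (by exact_mod_cast hb.le)
  linarith [Int.ceil_add_le a b]

theorem Int.le_ceil_add_of_sub_one_lt {a b : R} {m : ℤ} (hb : (m : R) - 1 < b) :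
    ⌈a⌉ + m - 1 ≤ ⌈a + b⌉ := by
  have hceil : m - 1 < ⌈b⌉ := Int.lt_ceil.2 (by exact_mod_cast hb)
  linarith [Int.ceil_add_ceil_le a b]

theorem Int.card_Ico_ceil_add_le {x y u v : R} {m : ℤ} (hu : (m : R) - 1 < u)
    (hv : v < m + 1) :
    (Finset.Ico ⌈x + u⌉ ⌈y + v⌉).card ≤ (Finset.Ico ⌈x⌉ ⌈y⌉).card + 2 := by
  have hleft := Int.le_ceil_add_of_sub_one_lt (a := x) hu
  have hright := Int.ceil_add_le_of_lt_add_one (a := y) hv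
  rw [Int.card_Ico, Int.card_Ico]
  omega

end CeilShift

theorem count_increment_le_two_general (n b c : ℕ) (m₁ : ℤ)
    (h1 : (m₁ : ℚ) - 1 < (n : ℚ) / c)
    (h4 : (n : ℚ) / b < (m₁ : ℚ) + 1) :
    ∀ j : ℕ, 1 ≤ j →
      (Finset.Ico ⌈(((j : ℚ) + 1) * n) / c⌉ ⌈(((j : ℚ) + 1) * n) / b⌉).card ≤
        (Finset.Ico ⌈((j : ℚ) * n) / c⌉ ⌈((j : ℚ) * n) / b⌉).card + 2 := by
  intro j _
  simp only [add_mul, one_mul, add_div]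
  exact Int.card_Ico_ceil_add_le h1 h4

theorem count_increment_le_two (n b c : ℕ) (m₁ : ℤ) (hb : 0 < b) (hbc : b < c)
    (hbn : 2 * b ≤ n)
    (h1 : (m₁ : ℚ) - 1 < (n : ℚ) / c) (h2 : (n : ℚ) / c ≤ (m₁ : ℚ))
    (h3 : (m₁ : ℚ) < (n : ℚ) / b) (h4 : (n : ℚ) / b < (m₁ : ℚ) + 1) :
    ∀ j : ℕ, 1 ≤ j →
      (Finset.Ico ⌈(((j : ℚ) + 1) * n) / c⌉ ⌈(((j : ℚ) + 1) * n) / b⌉).card ≤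
        (Finset.Ico ⌈((j : ℚ) * n) / c⌉ ⌈((j : ℚ) * n) / b⌉).card + 2 :=
  count_increment_le_two_general n b c m₁ h1 h4
end

section
/- Let n, b, c, l, m₁ be positive integers with m₁ − 1 < n/c ≤ m₁ < n/b < m₁ + 1, and suppose l ≥ 3 is the smallest integer such that [ln/c, ln/b) contains at least 4 integers. Then lm₁ − 4 < ln/c < ln/b < lm₁ + 4, and consequently l < 8bc/((c−b)n). -/
/-!
Put `k = l - 1`. Since `k n / c ≤ k m₁ < k n / b` and, by minimality of `l`, the interval
`[k n / c, k n / b)` holds at most three integers, both endpoints lie within `3` of `k m₁`.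
One more step moves the endpoints by `n / c > m₁ - 1` and `n / b < m₁ + 1`, which gives the
bounds at `l` with slack `4`; their difference `l n (c - b) / (b c)` is then below `8`.
-/

section

variable {α : Type*} [Field α] [LinearOrder α] [IsStrictOrderedRing α] [FloorRing α]

theorem bounds_of_card_Ico_ceil_lt {x y : α} {m : ℤ} {N : ℕ} (hx : x ≤ m) (hy : m < y)
    (hcard : (Finset.Ico ⌈x⌉ ⌈y⌉).card < N) :
    (m : α) - N + 1 < x ∧ y ≤ m + N - 1 := by
  rw [Int.card_Ico] at hcard
  have hceil_x : ⌈x⌉ ≤ m := Int.ceil_le.mpr hx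
  have hceil_y : m < ⌈y⌉ := Int.lt_ceil.mpr hy
  have hgap : ⌈y⌉ - ⌈x⌉ ≤ N - 1 := by omega
  have hceil_x' : ((m - N + 2 : ℤ) : α) ≤ ⌈x⌉ := by exact_mod_cast (by omega : m - N + 2 ≤ ⌈x⌉)
  have hceil_y' : (⌈y⌉ : α) ≤ ((m + N - 1 : ℤ) : α) := by
    exact_mod_cast (by omega : ⌈y⌉ ≤ m + N - 1)
  push_cast at hceil_x' hceil_y'
  constructor
  · linarith [Int.ceil_lt_add_one x]
  · linarith [Int.le_ceil y]

theorem bounds_succ_of_card_Ico_ceil_lt {p q : α} {m : ℤ} {k N : ℕ}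
    (hpm : (m : α) - 1 < p) (hp : p ≤ m) (hq : (m : α) < q) (hqm : q < m + 1) (hk : 0 < k)
    (hcard : (Finset.Ico ⌈k * p⌉ ⌈k * q⌉).card < N) :
    ((k + 1 : α) * m - N < (k + 1) * p ∧ (k + 1) * q < (k + 1 : α) * m + N) := by
  have hk' : (0 : α) < k := by exact_mod_cast hk
  have hkp : (k : α) * p ≤ ((k * m : ℤ) : α) := by
    push_cast; exact mul_le_mul_of_nonneg_left hp hk'.le
  have hkq : ((k * m : ℤ) : α) < k * q := by
    push_cast; exact mul_lt_mul_of_pos_left hq hk'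
  obtain ⟨hlow, hhigh⟩ := bounds_of_card_Ico_ceil_lt hkp hkq hcard
  push_cast at hlow hhigh
  constructor <;> linarith

end

theorem minimal_l_bounds_general (n b c l : ℕ) (m₁ : ℤ) (hn : 0 < n) (hb : 0 < b)
    (hbc : b < c)
    (h1 : (m₁ : ℚ) - 1 < (n : ℚ) / c) (h2 : (n : ℚ) / c ≤ (m₁ : ℚ))
    (h3 : (m₁ : ℚ) < (n : ℚ) / b) (h4 : (n : ℚ) / b < (m₁ : ℚ) + 1)
    (hl : 3 ≤ l)
    (hmin : ∀ l' : ℕ, 0 < l' → l' < l →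
      (Finset.Ico ⌈((l' : ℚ) * n) / c⌉ ⌈((l' : ℚ) * n) / b⌉).card < 4) :
    ((l : ℚ) * m₁ - 4 < ((l : ℚ) * n) / c ∧ ((l : ℚ) * n) / b < (l : ℚ) * m₁ + 4) ∧
      (l : ℚ) < 8 * b * c / (((c : ℚ) - b) * n) := by
  have hl_succ : ((l - 1 : ℕ) : ℚ) + 1 = l := by norm_cast; omega
  have hcard := hmin (l - 1) (by omega) (by omega)
  simp only [mul_div_assoc] at hcard
  have hbounds := bounds_succ_of_card_Ico_ceil_lt h1 h2 h3 h4 (by omega : 0 < l - 1) hcard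
  simp only [hl_succ, ← mul_div_assoc, Nat.cast_ofNat] at hbounds
  refine ⟨hbounds, ?_⟩
  have hb' : (0 : ℚ) < b := by exact_mod_cast hb
  have hbc' : (b : ℚ) < c := by exact_mod_cast hbc
  have hc' : (0 : ℚ) < c := hb'.trans hbc'
  have hn' : (0 : ℚ) < n := by exact_mod_cast hn
  have hwidth : (l : ℚ) * n / b - l * n / c = l * ((c - b) * n) / (b * c) := by
    field_simp
  have hwidth_lt : (l : ℚ) * ((c - b) * n) / (b * c) < 8 := by linarith
  rw [div_lt_iff₀ (by positivity)] at hwidth_lt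
  rw [lt_div_iff₀ (mul_pos (sub_pos.mpr hbc') hn')]
  linarith

theorem minimal_l_bounds (n b c l : ℕ) (m₁ : ℤ) (hn : 0 < n) (hb : 0 < b)
    (hbc : b < c) (hcn : c ≤ n)
    (h1 : (m₁ : ℚ) - 1 < (n : ℚ) / c) (h2 : (n : ℚ) / c ≤ (m₁ : ℚ))
    (h3 : (m₁ : ℚ) < (n : ℚ) / b) (h4 : (n : ℚ) / b < (m₁ : ℚ) + 1)
    (hl : 3 ≤ l)
    (hl4 : 4 ≤ (Finset.Ico ⌈((l : ℚ) * n) / c⌉ ⌈((l : ℚ) * n) / b⌉).card)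
    (hmin : ∀ l' : ℕ, 0 < l' → l' < l →
      (Finset.Ico ⌈((l' : ℚ) * n) / c⌉ ⌈((l' : ℚ) * n) / b⌉).card < 4) :
    ((l : ℚ) * m₁ - 4 < ((l : ℚ) * n) / c ∧ ((l : ℚ) * n) / b < (l : ℚ) * m₁ + 4) ∧
      (l : ℚ) < 8 * b * c / (((c : ℚ) - b) * n) :=
  minimal_l_bounds_general n b c l m₁ hn hb hbc h1 h2 h3 h4 hl hmin
end

section
/- Let n, a, b, c, e be positive integers with e < a ≤ b ≤ n/2 < c < n, c − b = a − e, a > 2e, and set s = ⌊b/a⌋ ≥ 2. Suppose that for every t ∈ [0, ⌊s/2⌋ − 1], the interval [(2s−2t−1)n/(2b), (s−t)n/b] contains no integer coprime to n, where n is a product of three distinct primes each ≥ 5. Then each such interval contains at most 3 integers, and consequently n/(2b) < 4. -/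
/-!
A prime `p ≥ 4` divides at most one of four consecutive integers, so the at most three prime
factors of `n` cannot cover four consecutive integers: an interval containing no integer coprime
to `n` contains at most three integers. The interval for `t = 0` has length `n / (2b)`, whence
`n / (2b) < 4`.
-/

open Finset

theorem Int.exists_gcd_eq_one_mem_Ico {n m : ℕ} (hn : n ≠ 0) (hcard : n.primeFactors.card < m)
    (hle : ∀ p ∈ n.primeFactors, m ≤ p) (x : ℤ) :
    ∃ z ∈ Ico x (x + m), Int.gcd z n = 1 := by
  by_contra! hgcd
  have hfactor : ∀ z : ℤ, ∃ p : ℕ, z ∈ Ico x (x + m) → p ∈ n.primeFactors ∧ (p : ℤ) ∣ z := by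
    intro z
    by_cases hz : z ∈ Ico x (x + m)
    · obtain ⟨p, hp, hpd⟩ := Nat.exists_prime_and_dvd (hgcd z hz)
      exact ⟨p, fun _ => ⟨Nat.mem_primeFactors.2 ⟨hp, hpd.trans (Nat.gcd_dvd_right _ _), hn⟩,
        Int.natCast_dvd.2 (hpd.trans (Nat.gcd_dvd_left _ _))⟩⟩
    · exact ⟨0, fun h => absurd h hz⟩
  choose f hf using hfactor
  have hlt : n.primeFactors.card < (Ico x (x + m)).card := by simpa using hcard
  obtain ⟨z, hz, z', hz', hne, hfz⟩ :=
    exists_ne_map_eq_of_card_lt_of_maps_to hlt fun z hz => (hf z hz).1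
  have hdvd : (f z : ℤ) ∣ z - z' := dvd_sub (hf z hz).2 (hfz ▸ (hf z' hz').2)
  have habs : |z - z'| < f z := by
    have := hle _ (hf z hz).1
    rw [mem_Ico] at hz hz'
    rw [abs_lt]; constructor <;> omega
  exact hne (sub_eq_zero.1 (Int.eq_zero_of_abs_lt_dvd hdvd habs))

theorem Nat.primeFactors_mul_mul_of_prime {p₁ p₂ p₃ : ℕ} (hp₁ : p₁.Prime) (hp₂ : p₂.Prime)
    (hp₃ : p₃.Prime) : (p₁ * p₂ * p₃).primeFactors = {p₁, p₂, p₃} := by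
  rw [Nat.primeFactors_mul (by positivity [hp₁.pos, hp₂.pos]) hp₃.ne_zero,
    Nat.primeFactors_mul hp₁.ne_zero hp₂.ne_zero, hp₁.primeFactors, hp₂.primeFactors,
    hp₃.primeFactors, union_assoc, ← insert_eq, ← insert_eq]

section FloorRing

variable {α : Type*} [Ring α] [LinearOrder α] [FloorRing α]

theorem card_Icc_ceil_floor_lt_of_not_exists_gcd_eq_one {n m : ℕ} (hn : n ≠ 0)
    (hcard : n.primeFactors.card < m) (hle : ∀ p ∈ n.primeFactors, m ≤ p) {x y : α}
    (h : ¬ ∃ z : ℤ, Int.gcd z n = 1 ∧ x ≤ z ∧ z ≤ y) :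
    (Icc ⌈x⌉ ⌊y⌋).card < m := by
  by_contra! hm
  rw [Int.card_Icc] at hm
  obtain ⟨z, hz, hgcd⟩ := Int.exists_gcd_eq_one_mem_Ico hn hcard hle ⌈x⌉
  rw [mem_Ico] at hz
  exact h ⟨z, hgcd, Int.ceil_le.1 hz.1, Int.le_floor.1 (by omega)⟩

theorem le_card_Icc_ceil_floor [IsStrictOrderedRing α] {x y : α} {m : ℕ} (h : x + m ≤ y) :
    m ≤ (Icc ⌈x⌉ ⌊y⌋).card := by
  have hceil := Int.ceil_le_floor_add_one x
  have hfloor : ⌊x⌋ + m ≤ ⌊y⌋ := by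
    rw [← Int.floor_add_natCast]; exact Int.floor_le_floor h
  rw [Int.card_Icc]; omega

end FloorRing

theorem at_most_three_integers_general (p₁ p₂ p₃ n e a b s : ℕ)
    (hp₁ : p₁.Prime) (hp₂ : p₂.Prime) (hp₃ : p₃.Prime)
    (h5₁ : 5 ≤ p₁) (h5₂ : 5 ≤ p₂) (h5₃ : 5 ≤ p₃)
    (hn : n = p₁ * p₂ * p₃)
    (hea : e < a) (hab : a ≤ b)
    (hs2 : 2 ≤ s)
    (hnocop : ∀ t : ℕ, t + 1 ≤ s / 2 →
      ¬ ∃ z : ℤ, Int.gcd z n = 1 ∧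
        ((2 * (s : ℚ) - 2 * t - 1) * n) / (2 * b) ≤ (z : ℚ) ∧
        (z : ℚ) ≤ (((s : ℚ) - t) * n) / b) :
    (∀ t : ℕ, t + 1 ≤ s / 2 →
      (Finset.Icc ⌈((2 * (s : ℚ) - 2 * t - 1) * n) / (2 * b)⌉
        ⌊(((s : ℚ) - t) * n) / b⌋).card ≤ 3) ∧
    (n : ℚ) < 8 * b := by
  have hn0 : n ≠ 0 := hn ▸ by positivity [hp₁.pos, hp₂.pos, hp₃.pos]
  have hfactors : n.primeFactors = {p₁, p₂, p₃} :=
    hn ▸ Nat.primeFactors_mul_mul_of_prime hp₁ hp₂ hp₃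
  have hcard : n.primeFactors.card < 4 := hfactors ▸ card_le_three.trans_lt (by norm_num)
  have hle : ∀ p ∈ n.primeFactors, 4 ≤ p := by
    simp only [hfactors, mem_insert, mem_singleton, forall_eq_or_imp, forall_eq]
    omega
  have hsmall : ∀ t : ℕ, t + 1 ≤ s / 2 → _ := fun t ht =>
    card_Icc_ceil_floor_lt_of_not_exists_gcd_eq_one hn0 hcard hle (hnocop t ht)
  refine ⟨fun t ht => Nat.lt_succ_iff.1 (hsmall t ht), ?_⟩
  by_contra! hbig
  have hb : (0 : ℚ) < b := by exact_mod_cast (Nat.zero_le e).trans_lt (hea.trans_le hab)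
  refine (hsmall 0 (by omega)).not_ge (le_card_Icc_ceil_floor ?_)
  have hlen : ((s : ℚ) - (0 : ℕ)) * n / b - (2 * s - 2 * (0 : ℕ) - 1) * n / (2 * b) =
      n / (2 * b) := by
    field_simp; ring
  have h4 : (4 : ℚ) ≤ n / (2 * b) := by rw [le_div_iff₀ (by positivity)]; linarith
  push_cast at hlen h4 ⊢
  linarith

theorem at_most_three_integers (p₁ p₂ p₃ n e a b c s : ℕ)
    (hp₁ : p₁.Prime) (hp₂ : p₂.Prime) (hp₃ : p₃.Prime)
    (h5₁ : 5 ≤ p₁) (h5₂ : 5 ≤ p₂) (h5₃ : 5 ≤ p₃)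
    (h12 : p₁ ≠ p₂) (h13 : p₁ ≠ p₃) (h23 : p₂ ≠ p₃)
    (hn : n = p₁ * p₂ * p₃)
    (he : 0 < e) (hea : e < a) (hab : a ≤ b) (hbn : 2 * b ≤ n) (hcn1 : n < 2 * c)
    (hcn2 : c < n) (hdiff : c + e = a + b) (hae : 2 * e < a)
    (hs : s = b / a) (hs2 : 2 ≤ s)
    (hnocop : ∀ t : ℕ, t + 1 ≤ s / 2 →
      ¬ ∃ z : ℤ, Int.gcd z n = 1 ∧
        ((2 * (s : ℚ) - 2 * t - 1) * n) / (2 * b) ≤ (z : ℚ) ∧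
        (z : ℚ) ≤ (((s : ℚ) - t) * n) / b) :
    (∀ t : ℕ, t + 1 ≤ s / 2 →
      (Finset.Icc ⌈((2 * (s : ℚ) - 2 * t - 1) * n) / (2 * b)⌉
        ⌊(((s : ℚ) - t) * n) / b⌋).card ≤ 3) ∧
    (n : ℚ) < 8 * b :=
  at_most_three_integers_general p₁ p₂ p₃ n e a b s hp₁ hp₂ hp₃ h5₁ h5₂ h5₃ hn hea hab hs2 hnocop
end
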